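/- (Hashimoto; Bass) Let G be a finite connected simple graph with n vertices, m edges, adjacency matrix A, and degree diagonal matrix D. Then for every t ∈ ℂ, det(I_{2m} − t·(B − J_0)) · (1 − t²)^n = (1 − t²)^m · det(I_n − t·A + t²·(D − I_n)); equivalently the reciprocal of the Ihara zeta function satisfies Z(G,t)^{-1} = det(I_{2m} − t(B − J_0)) = (1 − t²)^{r−1}·det(I_n − tA + t²(D − I_n)), where r = m − n + 1 is the Betti number of G. -/

import Mathlib

/-!
Following Stark–Terras, let `S` and `T` be the vertex–arc incidence matrices recording the origin
and the terminus of each arc. Then `B = Tᵀ S`, `A = S Tᵀ`, `T = S J₀`, `S Sᵀ = T Tᵀ = D` and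
`J₀² = 1`. With `c = 1 - t²`, the block matrix `[[c, t S], [c Tᵀ, 1 + t J₀]]` factors both as
`[[1, 0], [Tᵀ, 1]] · [[c, t S], [0, 1 - t (B - J₀)]]` and as
`[[c - t A + t² D, t S], [0, 1 + t J₀]] · [[1, 0], [(1 - t J₀) Tᵀ, 1]]`,
because `(1 + t J₀)(1 - t J₀) = c`. Comparing determinants leaves `det (1 + t J₀) = c ^ m`, which
holds because `J₀` swaps the two arcs over each edge. Nothing is divided by `c`, so `t = ±1`
needs no separate argument.
-/

variable {V : Type*} [Fintype V] [DecidableEq V]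

/-- The matrix `B` on arcs (darts): `B_{ef} = 1` if `t(e) = o(f)`, else `0`. -/
def arcMat (G : SimpleGraph V) [DecidableRel G.Adj] : Matrix G.Dart G.Dart ℂ :=
  Matrix.of fun e f => if e.snd = f.fst then 1 else 0

/-- The arc-reversal matrix `J₀`: `(J₀)_{ef} = 1` if `f = e⁻¹`, else `0`. -/
def arcRevMat (G : SimpleGraph V) [DecidableRel G.Adj] : Matrix G.Dart G.Dart ℂ :=
  Matrix.of fun e f => if f = e.symm then 1 else 0

namespace Matrix

variable {R : Type*} [CommRing R] {m n P : Type*} [Fintype m] [DecidableEq m]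
  [Fintype n] [DecidableEq n] [Fintype P] [DecidableEq P]

theorem det_one_add_smul_of_submatrix_eq_fromBlocks {J : Matrix m m R} (e : P ⊕ P ≃ m)
    (hJ : J.submatrix e e = fromBlocks 0 1 1 0) (t : R) :
    (1 + t • J).det = (1 - t ^ 2) ^ Fintype.card P := by
  have hblocks : (1 + t • J).submatrix e e = fromBlocks 1 (t • 1) (t • 1) 1 := calc
    _ = 1 + t • J.submatrix e e := by ext; simp [one_apply, e.injective.eq_iff]
    _ = _ := by rw [hJ, ← fromBlocks_one, fromBlocks_smul, fromBlocks_add]; simp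
  have hschur : (1 : Matrix P P R) - t • 1 * t • 1 = (1 - t ^ 2) • 1 := by
    rw [smul_mul_smul_comm, one_mul, sub_smul, one_smul, sq]
  rw [← det_submatrix_equiv_self e, hblocks, det_fromBlocks_one₂₂, hschur, det_smul, det_one,
    mul_one]

theorem det_one_sub_smul_mul_sub_mul_pow_card (S : Matrix n m R) (T : Matrix m n R)
    {J : Matrix m m R} (hJ : J * J = 1) (t : R) :
    (1 - t • (T * S - J)).det * (1 - t ^ 2) ^ Fintype.card n =
      (1 + t • J).det * ((1 - t ^ 2) • 1 - t • (S * T) + t ^ 2 • (S * J * T)).det := by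
  have hinv : (1 + t • J) * (1 - t • J) = (1 - t ^ 2) • 1 := by
    rw [add_mul, one_mul, mul_sub, mul_one, smul_mul_smul_comm, hJ, sq, sub_smul, one_smul]
    abel
  have hleft : fromBlocks 1 0 T 1 * fromBlocks ((1 - t ^ 2) • 1) (t • S) 0 (1 - t • (T * S - J)) =
      fromBlocks ((1 - t ^ 2) • 1) (t • S) ((1 - t ^ 2) • T) (1 + t • J) := by
    rw [fromBlocks_multiply]
    congr 1 <;>
    · simp only [Matrix.mul_sub, Matrix.mul_smul, Matrix.one_mul, Matrix.mul_one, Matrix.zero_mul,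
        Matrix.mul_zero]
      module
  have hright : fromBlocks ((1 - t ^ 2) • 1 - t • (S * T) + t ^ 2 • (S * J * T)) (t • S) 0
      (1 + t • J) * fromBlocks 1 0 ((1 - t • J) * T) 1 =
      fromBlocks ((1 - t ^ 2) • 1) (t • S) ((1 - t ^ 2) • T) (1 + t • J) := by
    rw [fromBlocks_multiply, ← Matrix.mul_assoc (1 + t • J), hinv]
    congr 1 <;>
    · simp only [Matrix.mul_sub, Matrix.sub_mul, Matrix.mul_smul, Matrix.smul_mul,
        Matrix.one_mul, Matrix.mul_one, Matrix.mul_zero, Matrix.mul_assoc, smul_smul]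
      module
  have hdet := congrArg det (hleft.trans hright.symm)
  rw [det_mul, det_mul, det_fromBlocks_zero₁₂, det_fromBlocks_zero₁₂, det_fromBlocks_zero₂₁,
    det_fromBlocks_zero₂₁, det_smul, det_one, det_one] at hdet
  linear_combination hdet

end Matrix

namespace SimpleGraph

section EdgeDart

variable {W : Type*} (G : SimpleGraph W)

theorem exists_dart_edge_eq {e : Sym2 W} (he : e ∈ G.edgeSet) : ∃ d : G.Dart, d.edge = e := by
  induction e using Sym2.ind with
  | h u v => exact ⟨⟨(u, v), he⟩, rfl⟩

noncomputable def edgeDart (e : G.edgeSet) : G.Dart := (G.exists_dart_edge_eq e.2).choose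

@[simp]
theorem edgeDart_edge (e : G.edgeSet) : (G.edgeDart e).edge = e :=
  (G.exists_dart_edge_eq e.2).choose_spec

theorem edgeDart_injective : Function.Injective G.edgeDart := fun e e' h =>
  Subtype.ext (by rw [← G.edgeDart_edge e, ← G.edgeDart_edge e', h])

theorem edgeDart_ne_symm (e e' : G.edgeSet) : G.edgeDart e ≠ (G.edgeDart e').symm := by
  intro h
  obtain rfl : e = e' := Subtype.ext (by rw [← G.edgeDart_edge e, ← G.edgeDart_edge e', h,
    Dart.edge_symm])
  exact (G.edgeDart e).symm_ne h.symm

noncomputable def sumEdgeSetEquivDart : G.edgeSet ⊕ G.edgeSet ≃ G.Dart :=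
  Equiv.ofBijective (Sum.elim G.edgeDart (Dart.symm ∘ G.edgeDart)) <| by
    refine ⟨?_, fun d => ?_⟩
    · rintro (e | e) (e' | e') h <;>
        simp only [Sum.elim_inl, Sum.elim_inr, Function.comp_apply] at h
      · rw [G.edgeDart_injective h]
      · exact absurd h (G.edgeDart_ne_symm e e')
      · exact absurd h.symm (G.edgeDart_ne_symm e' e)
      · rw [G.edgeDart_injective (Dart.symm_involutive.injective h)]
    · have hedge : (G.edgeDart ⟨d.edge, d.edge_mem⟩).edge = d.edge := G.edgeDart_edge _
      rcases (dart_edge_eq_iff _ _).mp hedge with h | h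
      · exact ⟨Sum.inl _, h⟩
      · exact ⟨Sum.inr _, by rw [Sum.elim_inr, Function.comp_apply, h, Dart.symm_symm]⟩

@[simp]
theorem sumEdgeSetEquivDart_inl (e : G.edgeSet) :
    G.sumEdgeSetEquivDart (Sum.inl e) = G.edgeDart e :=
  rfl

@[simp]
theorem sumEdgeSetEquivDart_inr (e : G.edgeSet) :
    G.sumEdgeSetEquivDart (Sum.inr e) = (G.edgeDart e).symm :=
  rfl

end EdgeDart

open Matrix

variable (R : Type*) [NonAssocSemiring R] (G : SimpleGraph V) [DecidableRel G.Adj]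

def startMat : Matrix V G.Dart R := Matrix.of fun v e => if e.fst = v then 1 else 0

def endMat : Matrix V G.Dart R := Matrix.of fun v e => if e.snd = v then 1 else 0

theorem startMat_mul_transpose_endMat : startMat R G * (endMat R G)ᵀ = G.adjMatrix R := by
  ext u v
  simp only [mul_apply, transpose_apply, startMat, endMat, of_apply, mul_ite, mul_one, mul_zero,
    ← ite_and, adjMatrix_apply]
  by_cases huv : G.Adj u v
  · have hdart (e : G.Dart) : (e.snd = v ∧ e.fst = u) ↔ e = ⟨(u, v), huv⟩ := by
      rw [Dart.ext_iff, Prod.ext_iff, and_comm]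
    simp only [hdart, Finset.sum_ite_eq', Finset.mem_univ, if_true, if_pos huv]
  · rw [if_neg huv]
    refine Finset.sum_eq_zero fun e _ => if_neg ?_
    rintro ⟨rfl, rfl⟩
    exact huv e.adj

theorem startMat_mul_transpose_startMat : startMat R G * (startMat R G)ᵀ = G.degMatrix R := by
  ext u v
  simp only [mul_apply, transpose_apply, startMat, of_apply, mul_ite, mul_one, mul_zero,
    ← ite_and, degMatrix, diagonal_apply]
  by_cases huv : u = v
  · subst huv
    simp only [and_self, Finset.sum_boole, if_true, dart_fst_fiber_card_eq_degree]
  · rw [if_neg huv]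
    refine Finset.sum_eq_zero fun e _ => if_neg ?_
    rintro ⟨rfl, rfl⟩
    exact huv rfl

theorem transpose_endMat_mul_startMat : (endMat ℂ G)ᵀ * startMat ℂ G = arcMat G := by
  ext e f
  simp only [mul_apply, transpose_apply, startMat, endMat, arcMat, of_apply, mul_ite, mul_one,
    mul_zero, Finset.sum_ite_eq, Finset.mem_univ, if_true]

theorem mul_arcRevMat_apply {ι : Type*} (M : Matrix ι G.Dart ℂ) (i : ι) (f : G.Dart) :
    (M * arcRevMat G) i f = M i f.symm := by
  simp [mul_apply, arcRevMat, eq_comm (a := f), Dart.symm_involutive.eq_iff]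

theorem arcRevMat_mul_self : arcRevMat G * arcRevMat G = 1 := by
  ext e f
  rw [mul_arcRevMat_apply]
  simp [arcRevMat, one_apply, Dart.symm_involutive.injective.eq_iff, eq_comm (a := f)]

theorem startMat_mul_arcRevMat : startMat ℂ G * arcRevMat G = endMat ℂ G := by
  ext v f
  rw [mul_arcRevMat_apply]
  simp [startMat, endMat]

theorem endMat_mul_transpose_endMat : endMat ℂ G * (endMat ℂ G)ᵀ = G.degMatrix ℂ := by
  have hsymm : (arcRevMat G)ᵀ = arcRevMat G := by
    ext e f
    simp [arcRevMat, eq_comm (a := f), Dart.symm_involutive.eq_iff]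
  rw [← startMat_mul_arcRevMat, transpose_mul, hsymm, Matrix.mul_assoc,
    ← Matrix.mul_assoc (arcRevMat G), arcRevMat_mul_self, Matrix.one_mul,
    startMat_mul_transpose_startMat]

theorem det_one_add_smul_arcRevMat (t : ℂ) :
    (1 + t • arcRevMat G).det = (1 - t ^ 2) ^ G.edgeFinset.card := by
  rw [edgeFinset_card]
  refine det_one_add_smul_of_submatrix_eq_fromBlocks G.sumEdgeSetEquivDart ?_ t
  ext (e | e) (e' | e') <;>
    simp [arcRevMat, one_apply, edgeDart_ne_symm, fun e e' => (G.edgeDart_ne_symm e e').symm,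
      Dart.symm_involutive.injective.eq_iff, G.edgeDart_injective.eq_iff, eq_comm (a := e')]

end SimpleGraph

open Matrix SimpleGraph in
theorem ihara_zeta_bass_general (G : SimpleGraph V) [DecidableRel G.Adj] (t : ℂ) :
    (1 - t • (arcMat G - arcRevMat G)).det * (1 - t ^ 2) ^ (Fintype.card V) =
      (1 - t ^ 2) ^ G.edgeFinset.card *
        (1 - t • (G.adjMatrix ℂ) +
          t ^ 2 • (Matrix.diagonal (fun v => (G.degree v : ℂ)) - 1)).det := by
  have hbass := det_one_sub_smul_mul_sub_mul_pow_card (startMat ℂ G) (endMat ℂ G)ᵀ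
    (arcRevMat_mul_self G) t
  rw [transpose_endMat_mul_startMat, startMat_mul_transpose_endMat, startMat_mul_arcRevMat,
    endMat_mul_transpose_endMat, det_one_add_smul_arcRevMat] at hbass
  rw [hbass, degMatrix, sub_smul, one_smul, smul_sub]
  congr 2
  abel

theorem ihara_zeta_bass (G : SimpleGraph V) [DecidableRel G.Adj] (hG : G.Connected) (t : ℂ) :
    (1 - t • (arcMat G - arcRevMat G)).det * (1 - t ^ 2) ^ (Fintype.card V) =
      (1 - t ^ 2) ^ G.edgeFinset.card *
        (1 - t • (G.adjMatrix ℂ) +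
          t ^ 2 • (Matrix.diagonal (fun v => (G.degree v : ℂ)) - 1)).det :=
  ihara_zeta_bass_general G t
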